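/- Let n ≥ 4. If G contains a triangle of non-edges, i.e. three vertices that are pairwise non-adjacent in G, then I_G^{(m)} ≠ I_G^m for every m ≥ 2. -/

import Mathlib

/-!
The monomial `x_a^(m-1) x_b^(m-1) x_c` has degree `2m - 1` and lies in every `P_{ij}^m`: an edge
`{i,j}` meets at most one of the pairwise non-adjacent vertices `a, b, c`, so two of the three
variables lie in `P_{ij}`, and any two of the exponents `m - 1, m - 1, 1` add up to at least `m`.
On the other hand every element of `I_G` has order at least `2`: no monomial of it is supported
at a single vertex `t`, because `t` lies on an edge `{t,u}` and `P_{tu}` is a monomial ideal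
avoiding `x_t`. Hence `I_G^m` only contains polynomials of order at least `2m`.
-/

open MvPolynomial

/-- The prime ideal `P_{ij}` of `S = k[x_1,…,x_n]` generated by all variables `x_t`
with `t ∉ {i,j}`. -/
noncomputable def varPrime (k : Type) [Field k] {n : ℕ} (i j : Fin n) :
    Ideal (MvPolynomial (Fin n) k) :=
  Ideal.span ((fun t => (X t : MvPolynomial (Fin n) k)) '' {t | t ≠ i ∧ t ≠ j})

/-- The `m`-th symbolic power `I_G^{(m)} = ⋂_{{i,j} ∈ G} P_{ij}^m`; for `m = 1` this is
the ideal `I_G` itself. -/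
noncomputable def symbolicPower (k : Type) [Field k] {n : ℕ} (G : SimpleGraph (Fin n))
    (m : ℕ) : Ideal (MvPolynomial (Fin n) k) :=
  ⨅ (i : Fin n) (j : Fin n) (_ : G.Adj i j), (varPrime k i j) ^ m

lemma Finsupp.add_le_degree_of_ne {σ : Type*} {i j : σ} (hij : i ≠ j) (x : σ →₀ ℕ) :
    x i + x j ≤ x.degree := by
  calc x i + x j = (single i (x i) + single j (x j)).degree := by simp
    _ ≤ x.degree := degree_mono fun s => by
        by_cases hi : s = i <;> by_cases hj : s = j <;> simp_all [eq_comm]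

lemma Ideal.pow_mul_pow_mem_pow {R : Type*} [CommSemiring R] {P : Ideal R} {x y : R}
    (hx : x ∈ P) (hy : y ∈ P) {r s m : ℕ} (h : m ≤ r + s) : x ^ r * y ^ s ∈ P ^ m :=
  Ideal.pow_le_pow_right h <|
    pow_add P r s ▸ Ideal.mul_mem_mul (Ideal.pow_mem_pow hx r) (Ideal.pow_mem_pow hy s)

lemma SimpleGraph.ne_and_ne_of_not_adj {V : Type*} {G : SimpleGraph V} {i j u v : V}
    (hij : G.Adj i j) (huv : u ≠ v) (h : ¬ G.Adj u v) (hu : u = i ∨ u = j) :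
    v ≠ i ∧ v ≠ j := by
  rcases hu with rfl | rfl <;> constructor <;> rintro rfl
  exacts [huv rfl, h hij, h hij.symm, huv rfl]

variable {k : Type} [Field k] {n : ℕ}

lemma X_mem_varPrime {i j t : Fin n} (hi : t ≠ i) (hj : t ≠ j) :
    (X t : MvPolynomial (Fin n) k) ∈ varPrime k i j :=
  Ideal.subset_span ⟨t, ⟨hi, hj⟩, rfl⟩

lemma mem_symbolicPower_iff {G : SimpleGraph (Fin n)} {m : ℕ} {f : MvPolynomial (Fin n) k} :
    f ∈ symbolicPower k G m ↔ ∀ i j, G.Adj i j → f ∈ varPrime k i j ^ m := by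
  simp only [symbolicPower, Submodule.mem_iInf]

lemma exists_ne_of_mem_support_of_mem_symbolicPower_one {G : SimpleGraph (Fin n)}
    (hG : ∀ v : Fin n, ∃ u : Fin n, G.Adj v u) {f : MvPolynomial (Fin n) k}
    (hf : f ∈ symbolicPower k G 1) {x : Fin n →₀ ℕ} (hx : x ∈ f.support) (t : Fin n) :
    ∃ i ≠ t, x i ≠ 0 := by
  obtain ⟨u, htu⟩ := hG t
  have hfP : f ∈ varPrime k t u := by simpa using mem_symbolicPower_iff.1 hf t u htu
  obtain ⟨i, ⟨hit, -⟩, hi⟩ := mem_ideal_span_X_image.1 hfP x hx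
  exact ⟨i, hit, hi⟩

lemma symbolicPower_one_le_idealOfVars_sq [NeZero n] {G : SimpleGraph (Fin n)}
    (hG : ∀ v : Fin n, ∃ u : Fin n, G.Adj v u) :
    symbolicPower k G 1 ≤ idealOfVars (Fin n) k ^ 2 := by
  intro f hf
  rw [mem_pow_idealOfVars_iff]
  intro x hx
  obtain ⟨i, -, hi⟩ := exists_ne_of_mem_support_of_mem_symbolicPower_one hG hf hx 0
  obtain ⟨j, hji, hj⟩ := exists_ne_of_mem_support_of_mem_symbolicPower_one hG hf hx i
  calc 2 ≤ x i + x j := by omega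
    _ ≤ x.degree := Finsupp.add_le_degree_of_ne hji.symm x

lemma X_pow_mul_X_pow_mul_X_notMem_pow_idealOfVars (a b c : Fin n) (p q : ℕ) :
    (X a ^ p * X b ^ q * X c : MvPolynomial (Fin n) k) ∉ idealOfVars (Fin n) k ^ (p + q + 2) := by
  have hmon : (X a ^ p * X b ^ q * X c : MvPolynomial (Fin n) k) =
      monomial (Finsupp.single a p + Finsupp.single b q + Finsupp.single c 1) 1 := by
    rw [X_pow_eq_monomial, X_pow_eq_monomial, X, monomial_mul, monomial_mul, mul_one, mul_one]
  rw [hmon, monomial_mem_pow_idealOfVars_iff _ _ one_ne_zero]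
  simp

lemma X_pow_mul_X_pow_mul_X_mem_symbolicPower {G : SimpleGraph (Fin n)} {a b c : Fin n}
    (hab : a ≠ b) (hbc : b ≠ c) (hac : a ≠ c)
    (nab : ¬ G.Adj a b) (nbc : ¬ G.Adj b c) (nac : ¬ G.Adj a c) {m : ℕ} (hm : 2 ≤ m) :
    (X a ^ (m - 1) * X b ^ (m - 1) * X c : MvPolynomial (Fin n) k) ∈ symbolicPower k G m := by
  rw [mem_symbolicPower_iff]
  intro i j hij
  by_cases ha : a = i ∨ a = j
  · obtain ⟨hbi, hbj⟩ := G.ne_and_ne_of_not_adj hij hab nab ha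
    obtain ⟨hci, hcj⟩ := G.ne_and_ne_of_not_adj hij hac nac ha
    have := Ideal.mul_mem_left _ (X a ^ (m - 1)) <| Ideal.pow_mul_pow_mem_pow (s := 1)
      (X_mem_varPrime (k := k) hbi hbj) (X_mem_varPrime hci hcj) (by omega : m ≤ m - 1 + 1)
    convert this using 1; ring
  push Not at ha
  by_cases hb : b = i ∨ b = j
  · obtain ⟨hci, hcj⟩ := G.ne_and_ne_of_not_adj hij hbc nbc hb
    have := Ideal.mul_mem_left _ (X b ^ (m - 1)) <| Ideal.pow_mul_pow_mem_pow (s := 1)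
      (X_mem_varPrime (k := k) ha.1 ha.2) (X_mem_varPrime hci hcj) (by omega : m ≤ m - 1 + 1)
    convert this using 1; ring
  push Not at hb
  exact Ideal.mul_mem_right _ _ <| Ideal.pow_mul_pow_mem_pow
    (X_mem_varPrime ha.1 ha.2) (X_mem_varPrime hb.1 hb.2) (by omega)

theorem stmt_15_general (k : Type) [Field k] (n : ℕ)
    (G : SimpleGraph (Fin n)) (hG : ∀ v : Fin n, ∃ u : Fin n, G.Adj v u)
    (a b c : Fin n) (hab : a ≠ b) (hbc : b ≠ c) (hac : a ≠ c)
    (nab : ¬ G.Adj a b) (nbc : ¬ G.Adj b c) (nac : ¬ G.Adj a c)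
    (m : ℕ) (hm : 2 ≤ m) :
    symbolicPower k G m ≠ (symbolicPower k G 1) ^ m := by
  intro heq
  have : NeZero n := ⟨a.pos.ne'⟩
  have hpow : symbolicPower k G 1 ^ m ≤ idealOfVars (Fin n) k ^ (m - 1 + (m - 1) + 2) := by
    rw [show m - 1 + (m - 1) + 2 = 2 * m by omega, pow_mul]
    exact Ideal.pow_right_mono (symbolicPower_one_le_idealOfVars_sq hG) m
  exact X_pow_mul_X_pow_mul_X_notMem_pow_idealOfVars a b c (m - 1) (m - 1) <|
    hpow <| heq ▸ X_pow_mul_X_pow_mul_X_mem_symbolicPower hab hbc hac nab nbc nac hm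

/-- Let `n ≥ 4`. If `G` contains a triangle of non-edges (three pairwise non-adjacent
vertices), then `I_G^{(m)} ≠ I_G^m` for every `m ≥ 2`. -/
theorem stmt_15 (k : Type) [Field k] (n : ℕ) (hn : 4 ≤ n)
    (G : SimpleGraph (Fin n)) (hG : ∀ v : Fin n, ∃ u : Fin n, G.Adj v u)
    (a b c : Fin n) (hab : a ≠ b) (hbc : b ≠ c) (hac : a ≠ c)
    (nab : ¬ G.Adj a b) (nbc : ¬ G.Adj b c) (nac : ¬ G.Adj a c)
    (m : ℕ) (hm : 2 ≤ m) :
    symbolicPower k G m ≠ (symbolicPower k G 1) ^ m :=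
  stmt_15_general k n G hG a b c hab hbc hac nab nbc nac m hm
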